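/- Let D ≥ 1 and let G_D and G_B be D × D real matrices each of whose entries lies in {0, 1}. Define the bow-free penalty h(G_D, G_B) = trace(exp(G_D)) − D + Σ_{i,j} (G_D)_{ij} · (G_B)_{ij}. Then h(G_D, G_B) ≥ 0, and h(G_D, G_B) = 0 if and only if both (i) the support digraph of G_D contains no closed walk (there is no k ≥ 1 and sequence i₀, …, i_k with i₀ = i_k and (G_D) i_l i_{l+1} = 1 for all 0 ≤ l < k), and (ii) for every pair (i, j), (G_D)_{ij} · (G_B)_{ij} = 0. -/

import Mathlib

/-!
For an entrywise nonnegative matrix `A`, the exponential series gives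
`trace (exp A) - D = ∑_{k ≥ 1} trace (A ^ k) / k!`, a sum of nonnegative terms, and
`trace (A ^ k) > 0` exactly when the digraph of positive entries of `A` has a closed walk of
length `k`. The Hadamard term `∑ (G_D)ᵢⱼ (G_B)ᵢⱼ` is a sum of nonnegative terms as well, so the
penalty vanishes iff both sums vanish termwise.
-/

open scoped Nat

namespace Matrix

section Walks

variable {R : Type*} [Semiring R] [LinearOrder R] [IsStrictOrderedRing R]
  {n : Type*} [Fintype n] [DecidableEq n] {A : Matrix n n R}

theorem pow_apply_pos_iff_exists_walk (hA : ∀ i j, 0 ≤ A i j) {k : ℕ} {i j : n} :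
    0 < (A ^ k) i j ↔ ∃ p : ℕ → n, p 0 = i ∧ p k = j ∧ ∀ l < k, 0 < A (p l) (p (l + 1)) := by
  induction k generalizing j with
  | zero =>
    by_cases hij : i = j
    · subst hij; exact ⟨fun _ => ⟨fun _ => i, rfl, rfl, by simp⟩, fun _ => by simp⟩
    · simp only [pow_zero, one_apply_ne hij, lt_irrefl, false_iff]
      rintro ⟨p, rfl, rfl, -⟩
      exact hij rfl
  | succ k ih =>
    have hstep : 0 < (A ^ (k + 1)) i j ↔ ∃ m, 0 < (A ^ k) i m ∧ 0 < A m j := by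
      rw [pow_succ, mul_apply, Finset.sum_pos_iff_of_nonneg
        fun m _ => mul_nonneg (pow_apply_nonneg hA k i m) (hA m j)]
      refine exists_congr fun m =>
        ⟨fun ⟨_, h⟩ => ?_, fun ⟨h₁, h₂⟩ => ⟨Finset.mem_univ m, mul_pos h₁ h₂⟩⟩
      exact ⟨pos_of_mul_pos_left h (hA m j), pos_of_mul_pos_right h (pow_apply_nonneg hA k i m)⟩
    simp only [hstep, ih]
    constructor
    · rintro ⟨m, ⟨p, hp0, hpk, hp⟩, hmj⟩
      refine ⟨Function.update p (k + 1) j, by simp [hp0], by simp, fun l hl => ?_⟩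
      rcases Nat.lt_succ_iff_lt_or_eq.mp hl with hl | rfl
      · simpa [Function.update_of_ne (show l ≠ k + 1 by omega),
          Function.update_of_ne (show l + 1 ≠ k + 1 by omega)] using hp l hl
      · simpa [Function.update_of_ne (show l ≠ l + 1 by omega), hpk] using hmj
    · rintro ⟨p, hp0, hpk, hp⟩
      exact ⟨p k, ⟨p, hp0, rfl, fun l hl => hp l (by omega)⟩, hpk ▸ hp k k.lt_succ_self⟩

theorem trace_pow_pos_iff_exists_closed_walk (hA : ∀ i j, 0 ≤ A i j) {k : ℕ} :
    0 < (A ^ k).trace ↔ ∃ p : ℕ → n, p 0 = p k ∧ ∀ l < k, 0 < A (p l) (p (l + 1)) := by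
  simp only [trace, diag_apply]
  rw [Finset.sum_pos_iff_of_nonneg fun i _ => pow_apply_nonneg hA k i i]
  simp only [Finset.mem_univ, true_and, pow_apply_pos_iff_exists_walk hA]
  exact ⟨fun ⟨i, p, hp0, hpk, hp⟩ => ⟨p, hp0.trans hpk.symm, hp⟩,
    fun ⟨p, hp0k, hp⟩ => ⟨p 0, p, rfl, hp0k.symm, hp⟩⟩

end Walks

section Exp

theorem hasSum_trace_exp {𝕂 : Type*} [RCLike 𝕂] {n : Type*} [Fintype n] [DecidableEq n]
    (A : Matrix n n 𝕂) :
    HasSum (fun k => (k !⁻¹ : 𝕂) * (A ^ k).trace) (NormedSpace.exp A).trace := by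
  have h : HasSum (fun k => (k !⁻¹ : 𝕂) • A ^ k) (NormedSpace.exp A) := by
    open scoped Norms.Operator in exact NormedSpace.exp_series_hasSum_exp' A
  simpa [Function.comp_def, trace_smul] using
    h.map (traceAddMonoidHom n 𝕂) continuous_id.matrix_trace

variable {n : Type*} [Fintype n] [DecidableEq n] {A : Matrix n n ℝ}

theorem hasSum_trace_exp_sub_card (A : Matrix n n ℝ) :
    HasSum (fun k => ((k + 1) !⁻¹ : ℝ) * (A ^ (k + 1)).trace)
      ((NormedSpace.exp A).trace - Fintype.card n) := by
  simpa [trace_one] using (hasSum_nat_add_iff' 1).mpr (hasSum_trace_exp A)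

theorem trace_pow_nonneg (hA : ∀ i j, 0 ≤ A i j) (k : ℕ) : 0 ≤ (A ^ k).trace :=
  Finset.sum_nonneg fun i _ => pow_apply_nonneg hA k i i

theorem trace_exp_sub_card_nonneg (hA : ∀ i j, 0 ≤ A i j) :
    0 ≤ (NormedSpace.exp A).trace - Fintype.card n :=
  (hasSum_trace_exp_sub_card A).nonneg fun k => mul_nonneg (by positivity) (trace_pow_nonneg hA _)

theorem trace_exp_sub_card_eq_zero_iff (hA : ∀ i j, 0 ≤ A i j) :
    (NormedSpace.exp A).trace - Fintype.card n = 0 ↔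
      ¬∃ (k : ℕ) (p : ℕ → n), 1 ≤ k ∧ p 0 = p k ∧ ∀ l < k, 0 < A (p l) (p (l + 1)) := by
  have hsum := hasSum_trace_exp_sub_card A
  have hterms : ∀ k, 0 ≤ ((k + 1) !⁻¹ : ℝ) * (A ^ (k + 1)).trace := fun k =>
    mul_nonneg (by positivity) (trace_pow_nonneg hA _)
  calc (NormedSpace.exp A).trace - Fintype.card n = 0
      ↔ ∀ k, ((k + 1) !⁻¹ : ℝ) * (A ^ (k + 1)).trace = 0 := by
        rw [← funext_iff (g := fun _ => (0 : ℝ)), ← Pi.zero_def,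
          ← hasSum_zero_iff_of_nonneg (L := SummationFilter.unconditional ℕ) hterms]
        exact ⟨fun h => h ▸ hsum, hsum.unique⟩
    _ ↔ ∀ k, ¬0 < (A ^ (k + 1)).trace := by
        refine forall_congr' fun k => ?_
        rw [mul_eq_zero, or_iff_right (by positivity), not_lt, le_antisymm_iff,
          and_iff_left (trace_pow_nonneg hA _)]
    _ ↔ _ := by
        simp only [trace_pow_pos_iff_exists_closed_walk hA]
        refine ⟨fun h ⟨k, p, hk, hp⟩ => ?_, fun h k ⟨p, hp⟩ => h ⟨k + 1, p, k.succ_pos, hp⟩⟩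
        obtain ⟨k, rfl⟩ := Nat.exists_eq_add_of_le' hk
        exact h k ⟨p, hp⟩

end Exp

end Matrix

theorem bow_free_penalty_nonneg_and_eq_zero_iff_general
    (D : ℕ) (GD GB : Matrix (Fin D) (Fin D) ℝ)
    (hGD : ∀ i j, GD i j = 0 ∨ GD i j = 1)
    (hGB : ∀ i j, GB i j = 0 ∨ GB i j = 1) :
    0 ≤ (NormedSpace.exp GD).trace - D + ∑ i, ∑ j, GD i j * GB i j ∧
    ((NormedSpace.exp GD).trace - D + ∑ i, ∑ j, GD i j * GB i j = 0 ↔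
      ((¬ ∃ (k : ℕ) (p : ℕ → Fin D), 1 ≤ k ∧ p 0 = p k ∧
          ∀ l < k, GD (p l) (p (l + 1)) = 1) ∧
        ∀ i j, GD i j * GB i j = 0)) := by
  have hGD_nonneg : ∀ i j, 0 ≤ GD i j := fun i j => by rcases hGD i j with h | h <;> simp [h]
  have hedge_pos_iff : ∀ i j, 0 < GD i j ↔ GD i j = 1 := fun i j => by
    rcases hGD i j with h | h <;> simp [h]
  have hbow_nonneg : ∀ i j, 0 ≤ GD i j * GB i j := fun i j =>
    mul_nonneg (hGD_nonneg i j) (by rcases hGB i j with h | h <;> simp [h])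
  have hexp : 0 ≤ (NormedSpace.exp GD).trace - D := by
    simpa only [Fintype.card_fin] using Matrix.trace_exp_sub_card_nonneg hGD_nonneg
  have hbow : 0 ≤ ∑ i, ∑ j, GD i j * GB i j :=
    Fintype.sum_nonneg fun i => Fintype.sum_nonneg fun j => hbow_nonneg i j
  have hbow_eq_zero : ∑ i, ∑ j, GD i j * GB i j = 0 ↔ ∀ i j, GD i j * GB i j = 0 := by
    simp [Fintype.sum_eq_zero_iff_of_nonneg, Pi.le_def, hbow_nonneg, Fintype.sum_nonneg, funext_iff]
  have hexp_eq_zero : (NormedSpace.exp GD).trace - D = 0 ↔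
      ¬∃ (k : ℕ) (p : ℕ → Fin D), 1 ≤ k ∧ p 0 = p k ∧ ∀ l < k, GD (p l) (p (l + 1)) = 1 := by
    simpa only [Fintype.card_fin, hedge_pos_iff] using
      Matrix.trace_exp_sub_card_eq_zero_iff hGD_nonneg
  exact ⟨add_nonneg hexp hbow, by
    rw [add_eq_zero_iff_of_nonneg hexp hbow, hexp_eq_zero, hbow_eq_zero]⟩

/-- The bow-free penalty `h(G_D, G_B) = trace (exp G_D) - D + ∑ᵢⱼ (G_D)ᵢⱼ (G_B)ᵢⱼ` of two
binary `D × D` matrices is nonnegative, and vanishes exactly when `G_D` has no closed walk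
and no pair of nodes carries both a directed and a bidirected edge. -/
theorem bow_free_penalty_nonneg_and_eq_zero_iff
    (D : ℕ) (hD : 1 ≤ D) (GD GB : Matrix (Fin D) (Fin D) ℝ)
    (hGD : ∀ i j, GD i j = 0 ∨ GD i j = 1)
    (hGB : ∀ i j, GB i j = 0 ∨ GB i j = 1) :
    0 ≤ (NormedSpace.exp GD).trace - D + ∑ i, ∑ j, GD i j * GB i j ∧
    ((NormedSpace.exp GD).trace - D + ∑ i, ∑ j, GD i j * GB i j = 0 ↔
      ((¬ ∃ (k : ℕ) (p : ℕ → Fin D), 1 ≤ k ∧ p 0 = p k ∧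
          ∀ l < k, GD (p l) (p (l + 1)) = 1) ∧
        ∀ i j, GD i j * GB i j = 0)) :=
  bow_free_penalty_nonneg_and_eq_zero_iff_general D GD GB hGD hGB
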